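/- Let T be an Ext-configuration in D = D^b(mod H) for a finite dimensional hereditary algebra H, i.e. a set of non-isomorphic indecomposable objects with (E1) Ext¹(X,Y) = 0 for all X, Y ∈ T and (E2) for every indecomposable Z ∉ T there exists X ∈ T with Ext¹(X,Z) ≠ 0. Then T is stable under F = τ⁻¹[1]: an indecomposable M lies in T if and only if FM lies in T. -/
import Mathlib


open CategoryTheory CategoryTheory.Limits

/-- An object of an additive category is indecomposable. -/
def Indec {C : Type*} [Category C] [Preadditive C] [HasZeroObject C]
    [HasBinaryBiproducts C] (X : C) : Prop :=
  ¬ IsZero X ∧ ∀ A B : C, Nonempty (X ≅ A ⊞ B) → IsZero A ∨ IsZero B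

/-- An object `Z` belongs (up to isomorphism) to a set `T` of objects. -/
def MemIso {C : Type*} [Category C] (T : Set C) (Z : C) : Prop :=
  ∃ X ∈ T, Nonempty (Z ≅ X)


section Aux

open CategoryTheory CategoryTheory.Limits

variable {C : Type*} [Category C] [Preadditive C] [HasZeroObject C] [HasBinaryBiproducts C]

/-- An equivalence of preadditive categories preserves indecomposability. -/
lemma indec_of_equiv (E : C ≌ C) (X : C) (hX : Indec X) : Indec (E.functor.obj X) := by
  have h1 : E.functor.Additive := E.functor.additive_of_preserves_binary_products
  have h2 : E.inverse.Additive := E.inverse.additive_of_preserves_binary_products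
  have h3 : PreservesBinaryBiproducts E.inverse :=
    preservesBinaryBiproducts_of_preservesBinaryProducts E.inverse
  obtain ⟨hnz, hdec⟩ := hX
  constructor
  · intro hz
    apply hnz
    rw [IsZero.iff_id_eq_zero] at hz ⊢
    apply E.functor.map_injective
    rw [CategoryTheory.Functor.map_id, E.functor.map_zero]
    exact hz
  · rintro A B ⟨e⟩
    have e2 : X ≅ E.inverse.obj A ⊞ E.inverse.obj B :=
      E.unitIso.app X ≪≫ E.inverse.mapIso e ≪≫ Functor.mapBiprod E.inverse A B
    rcases hdec _ _ ⟨e2⟩ with h | h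
    · left
      have hz : IsZero (E.functor.obj (E.inverse.obj A)) := by
        rw [IsZero.iff_id_eq_zero] at h ⊢
        rw [← CategoryTheory.Functor.map_id, h, CategoryTheory.Functor.map_zero]
      exact hz.of_iso (E.counitIso.app A).symm
    · right
      have hz : IsZero (E.functor.obj (E.inverse.obj B)) := by
        rw [IsZero.iff_id_eq_zero] at h ⊢
        rw [← CategoryTheory.Functor.map_id, h, CategoryTheory.Functor.map_zero]
      exact hz.of_iso (E.counitIso.app B).symm

end Aux

/-- Let `T` be an Ext-configuration in `D = D^b(mod H)` for a finite
dimensional hereditary algebra `H`, i.e. a set of non-isomorphic indecomposable objects with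
(E1) `Ext¹(X,Y) = 0` for all `X, Y ∈ T` and (E2) for every indecomposable `Z ∉ T` there
exists `X ∈ T` with `Ext¹(X,Z) ≠ 0`.  Then `T` is stable under `F = τ⁻¹[1]`: an
indecomposable `M` lies in `T` if and only if `FM` lies in `T`. -/
theorem ext_configuration_F_stable
    (k : Type) [Field k]
    -- the bounded derived category D = D^b(mod H):
    (D : Type) [Category D] [Preadditive D] [Linear k D]
    [HasZeroObject D] [HasFiniteBiproducts D] [HasBinaryBiproducts D]
    [∀ X Y : D, FiniteDimensional k (X ⟶ Y)]
    -- the shift [1] and the AR-translation τ of D; F = τ⁻¹ ∘ [1]: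
    (SD : D ≌ D) (τ : D ≌ D)
    -- the duality Ext¹_D(Y,X) ≅ D Ext¹_D(FX,Y):
    (dual : ∀ X Y : D, (Y ⟶ SD.functor.obj X) ≃ₗ[k]
      Module.Dual k ((τ.inverse ⋙ SD.functor).obj X ⟶ SD.functor.obj Y))
    -- T is a set of pairwise non-isomorphic indecomposable objects:
    (T : Set D)
    (hTind : ∀ X ∈ T, Indec X)
    (hTnoniso : ∀ X ∈ T, ∀ Y ∈ T, Nonempty (X ≅ Y) → X = Y)
    -- (E1): Ext¹(X,Y) = 0 for all X, Y in T:
    (hE1 : ∀ X ∈ T, ∀ Y ∈ T, ∀ f : X ⟶ SD.functor.obj Y, f = 0)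
    -- (E2): for any indecomposable Z not in T, there is X ∈ T with Ext¹(X,Z) ≠ 0:
    (hE2 : ∀ Z : D, Indec Z → ¬ MemIso T Z →
      ∃ X ∈ T, ∃ f : X ⟶ SD.functor.obj Z, f ≠ 0) :
    -- conclusion: M ∈ T if and only if F M ∈ T (as always, up to isomorphism):
    ∀ M : D, Indec M →
      (MemIso T M ↔ MemIso T ((τ.inverse ⋙ SD.functor).obj M)) := by
  intro M hM
  -- abbreviation for "Ext^1(B, A) = 0"
  -- transfer of ext-vanishing along the duality: ext(B,A)=0 iff ext(FA,B)=0
  have hdual0 : ∀ A B : D, (∀ f : B ⟶ SD.functor.obj A, f = 0) ↔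
      (∀ g : (τ.inverse ⋙ SD.functor).obj A ⟶ SD.functor.obj B, g = 0) := by
    intro A B
    constructor
    · intro h g
      refine (Module.forall_dual_apply_eq_zero_iff k g).mp ?_
      intro φ
      obtain ⟨f, rfl⟩ := (dual A B).surjective φ
      rw [h f]
      simp
    · intro h f
      have h0 : dual A B f = 0 := by
        apply LinearMap.ext
        intro g
        rw [h g]
        simp
      have := congrArg (dual A B).symm h0
      simpa using this
  -- ext-vanishing is invariant under isomorphisms in both arguments
  have hiso : ∀ (A A' B B' : D), (A ≅ A') → (B ≅ B') →
      (∀ f : B ⟶ SD.functor.obj A, f = 0) → (∀ f : B' ⟶ SD.functor.obj A', f = 0) := by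
    intro A A' B B' iA iB h f
    have hg := h (iB.hom ≫ f ≫ SD.functor.map iA.inv)
    calc f = iB.inv ≫ (iB.hom ≫ f ≫ SD.functor.map iA.inv) ≫ SD.functor.map iA.hom := by
              simp [← Functor.map_comp]
      _ = 0 := by rw [hg]; simp
  constructor
  · -- forward direction: M ∈ T → F M ∈ T
    rintro ⟨X₀, hX₀T, ⟨iM⟩⟩
    by_contra hFM
    have hFM_indec : Indec ((τ.inverse ⋙ SD.functor).obj M) :=
      indec_of_equiv (τ.symm.trans SD) M hM
    obtain ⟨X, hXT, f, hf⟩ := hE2 _ hFM_indec hFM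
    -- Z = F⁻¹ X
    have hZiso : (τ.inverse ⋙ SD.functor).obj ((SD.inverse ⋙ τ.functor).obj X) ≅ X :=
      (τ.symm.trans SD).counitIso.app X
    set Z := (SD.inverse ⋙ τ.functor).obj X with hZdef
    -- ext(X, FM) ≠ 0
    have h1 : ¬ (∀ g : X ⟶ SD.functor.obj ((τ.inverse ⋙ SD.functor).obj M), g = 0) :=
      fun h => hf (h f)
    -- ext(F Z, FM) ≠ 0
    have h2 : ¬ (∀ g : (τ.inverse ⋙ SD.functor).obj Z ⟶
        SD.functor.obj ((τ.inverse ⋙ SD.functor).obj M), g = 0) :=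
      fun h => h1 (hiso _ _ _ _ (Iso.refl _) hZiso h)
    -- ext(F M, Z) ≠ 0
    have h3 : ¬ (∀ g : (τ.inverse ⋙ SD.functor).obj M ⟶ SD.functor.obj Z, g = 0) :=
      fun h => h2 ((hdual0 Z _).mp h)
    -- ext(Z, M) ≠ 0
    have h4 : ¬ (∀ g : Z ⟶ SD.functor.obj M, g = 0) :=
      fun h => h3 ((hdual0 M Z).mp h)
    -- Z is not in T (up to iso), since ext(-, M) vanishes on T
    have hZnotT : ¬ MemIso T Z := by
      rintro ⟨X₂, hX₂T, ⟨iZ⟩⟩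
      exact h4 (hiso X₀ M X₂ Z iM.symm iZ.symm (hE1 X₂ hX₂T X₀ hX₀T))
    have hZindec : Indec Z :=
      indec_of_equiv (τ.symm.trans SD).symm X (hTind X hXT)
    obtain ⟨X₃, hX₃T, g, hg⟩ := hE2 Z hZindec hZnotT
    exact hg (((hdual0 Z X₃).mpr
      (hiso X₃ X₃ X _ (Iso.refl _) hZiso.symm (hE1 X hXT X₃ hX₃T))) g)
  · -- reverse direction: F M ∈ T → M ∈ T
    rintro ⟨X₁, hX₁T, ⟨iFM⟩⟩
    by_contra hMT
    obtain ⟨X, hXT, f, hf⟩ := hE2 M hM hMT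
    exact hf (((hdual0 M X).mpr
      (hiso X X X₁ _ (Iso.refl _) iFM.symm (hE1 X₁ hX₁T X hXT))) f)
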